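/- arXiv:2010.15395 — 2 statements merged into one kernel-verified Lean document; each statement's English description precedes it below -/
import Mathlib

section
/- For any partition η with m' parts fitting in an m' × (n+1−m') rectangle and any integer 0 ≤ k ≤ m', the sum Ψ(η, k) = Σ_{ι ∈ A_k} Π_{j=1}^{k} (t_{u_{ι_j + j − 1}} − t_{ι_j}) equals the factorial elementary symmetric polynomial e_k(x | t) in variables x_1,...,x_{m'} and parameters t_1,...,t_{n+1}, evaluated at the specialization x_i = t_{u_i}, where u_1 < ... < u_{m'} are the up-steps of η enumerated from the bottom of the rectangle. -/
/-! Substituting `ℓ_j = ι_j + j - 1` turns the factor `x_{ℓ_j} - t_{ℓ_j - j + 1}` of `e_k(x | t)`,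
specialized at `x_i = t_{u_i}`, into the factor `t_{u_{ι_j + j - 1}} - t_{ι_j}` of `Ψ(η, k)`; and
`ι ↦ ℓ` is a bijection from the weakly increasing `ι ∈ A_k` onto the strictly increasing
`ℓ ∈ [1, m']^k`, with inverse `ℓ_j ↦ ℓ_j - j + 1`. -/

namespace Fin

theorem apply_add_sub_le_of_strictMono {k : ℕ} {g : Fin k → ℕ} (hg : StrictMono g)
    {a b : Fin k} (hab : a ≤ b) : g a + (b - a : ℕ) ≤ g b := by
  obtain ⟨d, hd⟩ : ∃ d, (b : ℕ) = a + d := ⟨b - a, by rw [Fin.le_def] at hab; omega⟩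
  induction d generalizing b with
  | zero => rw [show b = a from Fin.ext (by omega)]; simp
  | succ d ih =>
    have hprev : g a + d ≤ g ⟨a + d, by omega⟩ := by
      simpa using ih (b := ⟨a + d, by omega⟩) (by rw [Fin.le_def]; simp) rfl
    have hstep : g ⟨a + d, by omega⟩ < g b := hg (by rw [Fin.lt_def]; dsimp; omega)
    omega

theorem val_le_apply_of_strictMono {k : ℕ} {g : Fin k → ℕ} (hg : StrictMono g) (j : Fin k) :
    (j : ℕ) ≤ g j := by
  have := apply_add_sub_le_of_strictMono hg (a := ⟨0, j.pos⟩) (b := j) (Nat.zero_le _)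
  simp only [Nat.sub_zero] at this
  omega

theorem val_apply_add_le_of_strictMono {k m : ℕ} {g : Fin k → Fin m} (hg : StrictMono g)
    (j : Fin k) : (g j : ℕ) + k ≤ m + j := by
  let last : Fin k := ⟨k - 1, by have := j.isLt; omega⟩
  have hj : j ≤ last := by rw [Fin.le_def]; dsimp [last]; omega
  have := apply_add_sub_le_of_strictMono (Fin.val_strictMono.comp hg) hj
  have := (g last).isLt
  dsimp [last] at *
  omega

def monotoneEquivStrictMono {m k : ℕ} (hk : k ≤ m) :
    {f : Fin k → Fin (m - k + 1) // Monotone f} ≃ {g : Fin k → Fin m // StrictMono g} where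
  toFun f := ⟨fun j => ⟨f.1 j + j, by omega⟩, fun a b hab => by
    have := f.2 hab.le
    rw [Fin.lt_def] at hab ⊢
    rw [Fin.le_def] at this
    dsimp
    omega⟩
  invFun g := ⟨fun j => ⟨g.1 j - j, by have := val_apply_add_le_of_strictMono g.2 j; omega⟩,
    fun a b hab => by
      have := apply_add_sub_le_of_strictMono (Fin.val_strictMono.comp g.2) hab
      have := val_le_apply_of_strictMono (Fin.val_strictMono.comp g.2) a
      rw [Fin.le_def] at hab ⊢
      dsimp at *
      omega⟩
  left_inv f := by ext; simp
  right_inv g := by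
    ext j
    have := val_le_apply_of_strictMono (Fin.val_strictMono.comp g.2) j
    dsimp at *
    omega

end Fin

theorem Psi_eq_factorial_esymm_specialized_general (m' k : ℕ) (hk : k ≤ m')
    (eta : ℕ → ℕ)
    (t : ℕ → ℤ) :
    ∑ f ∈ Finset.univ.filter
        (fun f : Fin k → Fin (m' - k + 1) => ∀ a b : Fin k, a ≤ b → f a ≤ f b),
      ∏ j : Fin k,
        (t (eta (m' - ((f j : ℕ) + 1 + (j : ℕ)) + 1) + ((f j : ℕ) + 1 + (j : ℕ)))
          - t ((f j : ℕ) + 1))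
    =
    ∑ g ∈ Finset.univ.filter
        (fun g : Fin k → Fin m' => ∀ a b : Fin k, a < b → g a < g b),
      ∏ j : Fin k,
        (t (eta (m' - ((g j : ℕ) + 1) + 1) + ((g j : ℕ) + 1))
          - t ((g j : ℕ) + 1 - (j : ℕ))) := by
  rw [Finset.sum_subtype _ (p := Monotone) fun f => by simp [Monotone],
    Finset.sum_subtype _ (p := StrictMono) fun g => by simp [StrictMono]]
  refine Fintype.sum_equiv (Fin.monotoneEquivStrictMono hk) _ _ fun f =>
    Finset.prod_congr rfl fun j _ => ?_
  simp only [Fin.monotoneEquivStrictMono, Equiv.coe_fn_mk]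
  rw [add_right_comm, show (f.1 j : ℕ) + j + 1 - j = f.1 j + 1 by omega]

theorem Psi_eq_factorial_esymm_specialized (m' n k : ℕ) (hk : k ≤ m') (hmn : m' ≤ n + 1)
    (eta : ℕ → ℕ)
    (hanti : ∀ i, 1 ≤ i → i < m' → eta (i + 1) ≤ eta i)
    (hbd : eta 1 ≤ n + 1 - m')
    (t : ℕ → ℤ) :
    ∑ f ∈ Finset.univ.filter
        (fun f : Fin k → Fin (m' - k + 1) => ∀ a b : Fin k, a ≤ b → f a ≤ f b),
      ∏ j : Fin k,
        (t (eta (m' - ((f j : ℕ) + 1 + (j : ℕ)) + 1) + ((f j : ℕ) + 1 + (j : ℕ)))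
          - t ((f j : ℕ) + 1))
    =
    ∑ g ∈ Finset.univ.filter
        (fun g : Fin k → Fin m' => ∀ a b : Fin k, a < b → g a < g b),
      ∏ j : Fin k,
        (t (eta (m' - ((g j : ℕ) + 1) + 1) + ((g j : ℕ) + 1))
          - t ((g j : ℕ) + 1 - (j : ℕ))) :=
  Psi_eq_factorial_esymm_specialized_general m' k hk eta t
end

section
/- For any partition η with m' parts and any k with 0 ≤ k ≤ m', the sum Ψ(η, k) = Σ_{ι ∈ A_k} Π_{j=1}^{k} (t_{u_{ι_j+j−1}} − t_{ι_j}), with u_i the up-steps of η from the bottom, is a polynomial in Z_{≥0}[t_2 − t_1, t_3 − t_2, ..., t_N − t_{N−1}]; i.e., each nonzero summand is a product of factors t_a − t_b with a > b, hence a nonnegative integer combination of consecutive differences. -/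
/-!
The `j`-th factor of a summand is `t_u - t_b` with `b = ι_j` and `u` the up-step
`η_{m'-p+1} + p`, `p = ι_j + j - 1`. Since `1 ≤ b ≤ p ≤ u ≤ η_1 + m' ≤ N` (using that `η` is
weakly decreasing), each factor telescopes into the consecutive differences
`t_{i+1} - t_i`, `b ≤ i < u`, so the whole sum of products lies in the semiring they generate.
-/

open MvPolynomial Finset

theorem sub_mem_closure_consecutive_sub {R : Type*} [Ring R] (t : ℕ → R) {N a b : ℕ}
    (hb : 1 ≤ b) (hba : b ≤ a) (ha : a ≤ N) :
    t a - t b ∈ Subsemiring.closure {p : R | ∃ i, 1 ≤ i ∧ i < N ∧ p = t (i + 1) - t i} := by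
  rw [← sum_Ico_sub (f := t) hba]
  refine sum_mem fun i hi => Subsemiring.subset_closure ?_
  have := mem_Ico.mp hi
  exact ⟨i, by omega, by omega, rfl⟩

theorem Psi_Graham_positive (m' N k : ℕ) (hk : k ≤ m') (eta : ℕ → ℕ)
    (hanti : ∀ i, 1 ≤ i → i < m' → eta (i + 1) ≤ eta i)
    (hN : eta 1 + m' ≤ N) :
    (∑ f ∈ Finset.univ.filter
        (fun f : Fin k → Fin (m' - k + 1) => ∀ a b : Fin k, a ≤ b → f a ≤ f b),
      ∏ j : Fin k,
        ((X (eta (m' - ((f j : ℕ) + 1 + (j : ℕ)) + 1) + ((f j : ℕ) + 1 + (j : ℕ)))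
            : MvPolynomial ℕ ℤ)
          - X ((f j : ℕ) + 1)))
      ∈ Subsemiring.closure
          {p : MvPolynomial ℕ ℤ | ∃ i, 1 ≤ i ∧ i < N ∧ p = X (i + 1) - X i} := by
  have heta : AntitoneOn eta (Set.Icc 1 m') :=
    antitoneOn_of_add_one_le Set.ordConnected_Icc fun i _ hi hi' => hanti i hi.1 hi'.2
  refine sum_mem fun f _ => prod_mem fun j _ => ?_
  have hj := j.isLt
  have hf := (f j).isLt
  have hup : eta (m' - ((f j : ℕ) + 1 + j) + 1) ≤ eta 1 :=
    heta ⟨le_rfl, by omega⟩ ⟨by omega, by omega⟩ (by omega)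
  exact sub_mem_closure_consecutive_sub X (by omega) (by omega) (by omega)
end
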